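/- Let β ∈ (0,1) and y > 0, and let (W_k)_{k≥1} and (V_k)_{k≥1} be random variables on a probability space (Ω, F, P) such that the family (W_1, V_1, W_2, V_2, …) is mutually independent, each W_k has the W-law with parameter β, and each V_k has the V-law with parameter β. Define M_k = y·∏_{j=1}^{k} W_j·V_j for k ≥ 1. Then almost surely M_k → 0 as k → ∞ and the series ∑_{k=1}^{∞} M_k converges (to a finite value). -/

import Mathlib

open MeasureTheory ProbabilityTheory Real Set Filter

/-!
The idea is to bound the square roots of the products rather than the products themselves.
By the layer-cake formula, `𝔼 √W = 1 - β` and `𝔼 √V = 1 + β`, so by independence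
`𝔼 √(∏_{j<k} W_j V_j) = (1 - β²)^k`. These expectations are summable, hence
`∑_k √(∏_{j<k} W_j V_j)` is finite almost surely, and the squares of a summable real
sequence are summable and tend to zero.
-/

theorem Summable.sq {s : ℕ → ℝ} (hs : Summable s) : Summable fun k => s k ^ 2 := by
  refine .of_nonneg_of_le (fun k => sq_nonneg _) (fun k => ?_) (hs.abs.mul_left (∑' j, |s j|))
  rw [← sq_abs, _root_.sq]
  exact mul_le_mul_of_nonneg_right (hs.abs.le_tsum k fun j _ => abs_nonneg _) (abs_nonneg _)

section

variable {Ω : Type*} {mΩ : MeasurableSpace Ω} {μ : Measure Ω} {X : Ω → ℝ}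

theorem ae_summable_of_tsum_lintegral_ofReal_ne_top {f : ℕ → Ω → ℝ}
    (hf : ∀ k, AEMeasurable (f k) μ) (hnn : ∀ k ω, 0 ≤ f k ω)
    (h : ∑' k, ∫⁻ ω, ENNReal.ofReal (f k ω) ∂μ ≠ ⊤) :
    ∀ᵐ ω ∂μ, Summable fun k => f k ω := by
  have hmeas : ∀ k, AEMeasurable (fun ω => ENNReal.ofReal (f k ω)) μ :=
    fun k => ENNReal.measurable_ofReal.comp_aemeasurable (hf k)
  filter_upwards [ae_lt_top' (AEMeasurable.tsum hmeas) (by rwa [lintegral_tsum hmeas])] with ω hω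
  simpa only [ENNReal.toReal_ofReal (hnn _ ω)] using ENNReal.summable_toReal hω.ne

theorem measure_lt_sqrt_of_cdf_rpow [IsProbabilityMeasure μ] {a : ℝ} (hX : Measurable X)
    (hcdf : ∀ w ∈ Icc (0:ℝ) 1, μ {ω | X ω ≤ w} = ENNReal.ofReal (w ^ a))
    {t : ℝ} (ht : t ∈ Ioc (0:ℝ) 1) :
    μ {ω | t < √(X ω)} = ENNReal.ofReal (1 - t ^ (2 * a)) := by
  have hset : {ω | t < √(X ω)} = {ω | X ω ≤ t ^ 2}ᶜ := by
    ext ω; simp [Real.lt_sqrt ht.1.le]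
  have hsq : t ^ 2 ∈ Icc (0:ℝ) 1 := ⟨sq_nonneg t, pow_le_one₀ ht.1.le ht.2⟩
  rw [hset, prob_compl_eq_one_sub (measurableSet_le hX measurable_const), hcdf _ hsq,
    ← Real.rpow_natCast_mul ht.1.le, ENNReal.ofReal_sub _ (Real.rpow_nonneg ht.1.le _),
    ENNReal.ofReal_one]
  norm_num

theorem integral_one_sub_rpow {q : ℝ} (hq : 0 < q) :
    ∫ t in (0:ℝ)..1, (1 - t ^ q) = q / (q + 1) := by
  rw [intervalIntegral.integral_sub intervalIntegrable_const
      (intervalIntegral.intervalIntegrable_rpow' (by linarith)),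
    intervalIntegral.integral_const, integral_rpow (Or.inl (by linarith)), Real.one_rpow,
    Real.zero_rpow (by positivity)]
  field_simp
  ring

theorem measure_lt_sqrt_eq_zero_of_cdf_rpow [IsProbabilityMeasure μ] {a : ℝ} (hX : Measurable X)
    (hcdf : ∀ w ∈ Icc (0:ℝ) 1, μ {ω | X ω ≤ w} = ENNReal.ofReal (w ^ a))
    {t : ℝ} (ht : 1 < t) : μ {ω | t < √(X ω)} = 0 := by
  have hle : μ {ω | X ω ≤ 1}ᶜ = 0 := by
    rw [prob_compl_eq_zero_iff (measurableSet_le hX measurable_const), hcdf 1 (by simp)]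
    simp
  exact measure_mono_null (fun _ hω hle => (Real.sqrt_le_one.mpr hle).not_gt (ht.trans hω)) hle

theorem lintegral_ofReal_sqrt_of_cdf_rpow [IsProbabilityMeasure μ] {a : ℝ} (ha : 0 < a)
    (hX : Measurable X)
    (hcdf : ∀ w ∈ Icc (0:ℝ) 1, μ {ω | X ω ≤ w} = ENNReal.ofReal (w ^ a)) :
    ∫⁻ ω, ENNReal.ofReal √(X ω) ∂μ = ENNReal.ofReal (2 * a / (2 * a + 1)) := by
  have hint : IntegrableOn (fun t : ℝ => 1 - t ^ (2 * a)) (Ioc 0 1) :=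
    (intervalIntegrable_iff_integrableOn_Ioc_of_le zero_le_one).mp
      (intervalIntegrable_const.sub (intervalIntegral.intervalIntegrable_rpow' (by linarith)))
  have hnn : 0 ≤ᵐ[volume.restrict (Ioc (0:ℝ) 1)] fun t => 1 - t ^ (2 * a) :=
    (ae_restrict_iff' measurableSet_Ioc).mpr (ae_of_all _ fun t ht =>
      sub_nonneg.mpr (Real.rpow_le_one ht.1.le ht.2 (by positivity)))
  rw [lintegral_eq_lintegral_meas_lt μ (ae_of_all _ fun _ => sqrt_nonneg _)
      (continuous_sqrt.measurable.comp hX).aemeasurable,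
    ← Ioc_union_Ioi_eq_Ioi zero_le_one,
    lintegral_union measurableSet_Ioi (Ioc_disjoint_Ioi le_rfl),
    setLIntegral_congr_fun measurableSet_Ioc (fun t ht => measure_lt_sqrt_of_cdf_rpow hX hcdf ht),
    setLIntegral_congr_fun measurableSet_Ioi
      (fun t ht => measure_lt_sqrt_eq_zero_of_cdf_rpow hX hcdf ht),
    lintegral_zero, add_zero, ← ofReal_integral_eq_lintegral_ofReal hint hnn,
    ← intervalIntegral.integral_of_le zero_le_one, integral_one_sub_rpow (by positivity)]

theorem measure_lt_sqrt_of_tail_rpow {b : ℝ}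
    (htail : ∀ v : ℝ, 1 ≤ v → μ {ω | v < X ω} = ENNReal.ofReal (v ^ (-b)))
    {t : ℝ} (ht : 1 ≤ t) : μ {ω | t < √(X ω)} = ENNReal.ofReal (t ^ (-(2 * b))) := by
  have hset : {ω | t < √(X ω)} = {ω | t ^ 2 < X ω} := by
    ext ω; simp [Real.lt_sqrt (by linarith : (0:ℝ) ≤ t)]
  rw [hset, htail _ (one_le_pow₀ ht), ← Real.rpow_natCast_mul (by linarith)]
  norm_num

theorem measure_lt_sqrt_eq_one_of_tail_rpow [IsProbabilityMeasure μ] {b : ℝ}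
    (htail : ∀ v : ℝ, 1 ≤ v → μ {ω | v < X ω} = ENNReal.ofReal (v ^ (-b)))
    {t : ℝ} (ht : t < 1) : μ {ω | t < √(X ω)} = 1 := by
  refine le_antisymm prob_le_one ?_
  calc (1 : ENNReal) = μ {ω | 1 < X ω} := by rw [htail 1 le_rfl]; simp
    _ ≤ μ {ω | t < √(X ω)} :=
      measure_mono fun ω hω => ht.trans (Real.lt_sqrt zero_le_one |>.mpr (by simpa using hω))

theorem lintegral_ofReal_sqrt_of_tail_rpow [IsProbabilityMeasure μ] {b : ℝ} (hb : 1 / 2 < b)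
    (hX : Measurable X)
    (htail : ∀ v : ℝ, 1 ≤ v → μ {ω | v < X ω} = ENNReal.ofReal (v ^ (-b))) :
    ∫⁻ ω, ENNReal.ofReal √(X ω) ∂μ = ENNReal.ofReal (2 * b / (2 * b - 1)) := by
  have hexp : -(2 * b) < -1 := by linarith
  rw [lintegral_eq_lintegral_meas_lt μ (ae_of_all _ fun _ => sqrt_nonneg _)
      (continuous_sqrt.measurable.comp hX).aemeasurable,
    ← Ioo_union_Ici_eq_Ioi zero_lt_one,
    lintegral_union measurableSet_Ici ((Iio_disjoint_Ici le_rfl).mono_left Ioo_subset_Iio_self),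
    setLIntegral_congr_fun measurableSet_Ioo
      (fun t ht => measure_lt_sqrt_eq_one_of_tail_rpow htail ht.2),
    setLIntegral_congr_fun measurableSet_Ici (fun t ht => measure_lt_sqrt_of_tail_rpow htail ht),
    ← setLIntegral_congr Ioi_ae_eq_Ici, setLIntegral_one, Real.volume_Ioo,
    ← ofReal_integral_eq_lintegral_ofReal (integrableOn_Ioi_rpow_of_lt hexp zero_lt_one)
      ((ae_restrict_iff' measurableSet_Ioi).mpr
        (ae_of_all _ fun t ht => Real.rpow_nonneg (zero_le_one.trans ht.le) _)),
    integral_Ioi_rpow_of_lt hexp zero_lt_one, Real.one_rpow,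
    ← ENNReal.ofReal_add (by norm_num) (div_nonneg_of_nonpos (by norm_num) (by linarith))]
  have hne : 2 * b - 1 ≠ 0 := by linarith
  rw [show -(2 * b) + 1 = -(2 * b - 1) by ring]
  congr 1
  field_simp
  ring

theorem lintegral_ofReal_prod_sqrt_mul_sqrt {W V : ℕ → Ω → ℝ}
    (hWm : ∀ k, Measurable (W k)) (hVm : ∀ k, Measurable (V k))
    (hInd : iIndepFun (fun p : ℕ × Bool => if p.2 then W p.1 else V p.1) μ) (k : ℕ) :
    ∫⁻ ω, ENNReal.ofReal (∏ j ∈ Finset.range k, √(W j ω) * √(V j ω)) ∂μ =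
      ∏ j ∈ Finset.range k,
        (∫⁻ ω, ENNReal.ofReal √(W j ω) ∂μ) * ∫⁻ ω, ENNReal.ofReal √(V j ω) ∂μ := by
  set Y : ℕ × Bool → Ω → ℝ := fun p => if p.2 then W p.1 else V p.1
  have hYm : ∀ p, Measurable (Y p) := by rintro ⟨j, _ | _⟩; exacts [hVm j, hWm j]
  have hφ : Measurable fun x : ℝ => ENNReal.ofReal √x :=
    ENNReal.measurable_ofReal.comp continuous_sqrt.measurable
  have hprod : ∀ ω, ENNReal.ofReal (∏ j ∈ Finset.range k, √(W j ω) * √(V j ω)) =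
      ∏ p ∈ Finset.range k ×ˢ Finset.univ, ENNReal.ofReal √(Y p ω) := by
    intro ω
    rw [ENNReal.ofReal_prod_of_nonneg (fun j _ => by positivity), Finset.prod_product]
    simp [ENNReal.ofReal_mul, Y]
  simp_rw [hprod]
  rw [lintegral_prod_eq_prod_lintegral_of_indepFun _ (fun p ω => ENNReal.ofReal √(Y p ω))
    (hInd.comp _ fun _ => hφ) (fun p => hφ.comp (hYm p)), Finset.prod_product]
  simp [Y]

end

theorem skew_martingale_tendsto_zero_and_summable_general {Ω : Type*} [MeasureSpace Ω]
    [IsProbabilityMeasure (ℙ : Measure Ω)]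
    (β y : ℝ) (hβ : β ∈ Set.Ioo (0:ℝ) 1)
    (W V : ℕ → Ω → ℝ) (hWm : ∀ k, Measurable (W k)) (hVm : ∀ k, Measurable (V k))
    (hInd : iIndepFun (m := fun _ : ℕ × Bool => Real.measurableSpace)
      (fun p => if p.2 then W p.1 else V p.1) ℙ)
    (hW01 : ∀ k, ∀ᵐ ω, W k ω ∈ Set.Icc (0:ℝ) 1)
    (hWcdf : ∀ k, ∀ w ∈ Set.Icc (0:ℝ) 1,
      ℙ {ω | W k ω ≤ w} = ENNReal.ofReal (w ^ ((1 - β) / (2 * β))))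
    (hV1 : ∀ k, ∀ᵐ ω, 1 ≤ V k ω)
    (hVtail : ∀ k, ∀ v : ℝ, 1 ≤ v →
      ℙ {ω | v < V k ω} = ENNReal.ofReal (v ^ (-(1 + β) / (2 * β)))) :
    ∀ᵐ ω, Tendsto (fun k => y * ∏ j ∈ Finset.range k, (W j ω * V j ω)) atTop (nhds 0) ∧
      Summable (fun k => y * ∏ j ∈ Finset.range (k + 1), (W j ω * V j ω)) := by
  obtain ⟨hβ0, hβ1⟩ := hβ
  have hW (j : ℕ) : ∫⁻ ω, ENNReal.ofReal √(W j ω) = ENNReal.ofReal (1 - β) := by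
    rw [lintegral_ofReal_sqrt_of_cdf_rpow (by bound) (hWm j) (hWcdf j)]
    congr 1; field_simp; ring
  have hV (j : ℕ) : ∫⁻ ω, ENNReal.ofReal √(V j ω) = ENNReal.ofReal (1 + β) := by
    rw [lintegral_ofReal_sqrt_of_tail_rpow (b := (1 + β) / (2 * β))
      (by rw [lt_div_iff₀ (by positivity)]; linarith) (hVm j)
      (by simpa only [neg_div] using hVtail j)]
    congr 1; field_simp; ring
  set s : ℕ → Ω → ℝ := fun k ω => ∏ j ∈ Finset.range k, √(W j ω) * √(V j ω)
  have hmean (k : ℕ) : ∫⁻ ω, ENNReal.ofReal (s k ω) = ENNReal.ofReal (1 - β ^ 2) ^ k := by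
    rw [lintegral_ofReal_prod_sqrt_mul_sqrt hWm hVm hInd, Finset.prod_congr rfl fun j _ => by
      rw [hW, hV, ← ENNReal.ofReal_mul (by linarith)], Finset.prod_const, Finset.card_range]
    ring_nf
  have hs : ∀ᵐ ω, Summable fun k => s k ω := by
    refine ae_summable_of_tsum_lintegral_ofReal_ne_top (fun k => by fun_prop)
      (fun k ω => by positivity) ?_
    simp_rw [hmean]
    exact (tsum_geometric_lt_top.mpr (ENNReal.ofReal_lt_one.mpr (by nlinarith))).ne
  filter_upwards [hs, ae_all_iff.2 hW01, ae_all_iff.2 hV1] with ω hsω hWω hVω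
  have hM (k : ℕ) : ∏ j ∈ Finset.range k, W j ω * V j ω = s k ω ^ 2 := by
    simp only [s, ← Finset.prod_pow, mul_pow, sq_sqrt (hWω _).1,
      sq_sqrt (zero_le_one.trans (hVω _))]
  have hMsum := hsω.sq.mul_left y
  simp only [hM]
  exact ⟨by simpa using hMsum.tendsto_atTop_zero, (summable_nat_add_iff 1).mpr hMsum⟩

/-- Let `(W_k)` and `(V_k)` be such that the whole family `(W_1, V_1, W_2, V_2, …)` is
mutually independent, each `W_k` has the W-law and each `V_k` the V-law with parameter
`β ∈ (0,1)`. Then `M_k = y·∏_{j<k} W_j V_j → 0` a.s. and `∑_{k≥1} M_k` converges a.s. -/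
theorem skew_martingale_tendsto_zero_and_summable {Ω : Type*} [MeasureSpace Ω]
    [IsProbabilityMeasure (ℙ : Measure Ω)]
    (β y : ℝ) (hβ : β ∈ Set.Ioo (0:ℝ) 1) (hy : 0 < y)
    (W V : ℕ → Ω → ℝ) (hWm : ∀ k, Measurable (W k)) (hVm : ∀ k, Measurable (V k))
    (hInd : iIndepFun (m := fun _ : ℕ × Bool => Real.measurableSpace)
      (fun p => if p.2 then W p.1 else V p.1) ℙ)
    (hW01 : ∀ k, ∀ᵐ ω, W k ω ∈ Set.Icc (0:ℝ) 1)
    (hWcdf : ∀ k, ∀ w ∈ Set.Icc (0:ℝ) 1,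
      ℙ {ω | W k ω ≤ w} = ENNReal.ofReal (w ^ ((1 - β) / (2 * β))))
    (hV1 : ∀ k, ∀ᵐ ω, 1 ≤ V k ω)
    (hVtail : ∀ k, ∀ v : ℝ, 1 ≤ v →
      ℙ {ω | v < V k ω} = ENNReal.ofReal (v ^ (-(1 + β) / (2 * β)))) :
    ∀ᵐ ω, Tendsto (fun k => y * ∏ j ∈ Finset.range k, (W j ω * V j ω)) atTop (nhds 0) ∧
      Summable (fun k => y * ∏ j ∈ Finset.range (k + 1), (W j ω * V j ω)) :=
  skew_martingale_tendsto_zero_and_summable_general β y hβ W V hWm hVm hInd hW01 hWcdf hV1 hVtail
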